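/- arXiv:math/0503186 — 6 statements merged into one kernel-verified Lean document; each statement's English description precedes it below -/
import Mathlib

section
/- For the matrices A = [[1,0],[1,1]] and B = [[1,1],[0,1]], every matrix in the multiplicative monoid generated by A and B is uniquely represented as a product of A's and B's (the monoid generated by A and B inside SL₂(ℤ) is free on {A,B}). -/
/-- A = [[1,0],[1,1]] -/
def matA : Matrix (Fin 2) (Fin 2) ℤ := !![1, 0; 1, 1]
/-- B = [[1,1],[0,1]] -/
def matB : Matrix (Fin 2) (Fin 2) ℤ := !![1, 1; 0, 1]

/-- The letter map: `true ↦ A`, `false ↦ B`. -/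
def letter : Bool → Matrix (Fin 2) (Fin 2) ℤ := fun b => if b then matA else matB

namespace FreeAB

abbrev P (w : List Bool) : Matrix (Fin 2) (Fin 2) ℤ := (w.map letter).prod

lemma good (w : List Bool) :
    0 < P w 0 0 ∧ 0 ≤ P w 0 1 ∧ 0 ≤ P w 1 0 ∧ 0 < P w 1 1 := by
  induction w with
  | nil => norm_num [P, Matrix.one_apply]
  | cons b t ih =>
    obtain ⟨h1, h2, h3, h4⟩ := ih
    have hP : P (b :: t) = letter b * P t := by simp [P]
    cases b <;>
      simp only [hP, letter, if_true, if_false, matA, matB] <;>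
      refine ⟨?_, ?_, ?_, ?_⟩ <;>
      · simp only [Matrix.mul_apply, Fin.sum_univ_two, Matrix.cons_val_zero,
          Matrix.cons_val_one, Matrix.head_cons, Matrix.head_fin_const]
        simp
        linarith

lemma cancel (b : Bool) (X Y : Matrix (Fin 2) (Fin 2) ℤ)
    (h : letter b * X = letter b * Y) : X = Y := by
  cases b
  · have hinv : (!![1, -1; 0, 1] : Matrix (Fin 2) (Fin 2) ℤ) * letter false = 1 := by
      rw [Matrix.one_fin_two]; norm_num [letter, matB, Matrix.mul_fin_two]
    calc X = (!![1, -1; 0, 1] * letter false) * X := by rw [hinv, one_mul]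
    _ = !![1, -1; 0, 1] * (letter false * X) := by rw [mul_assoc]
    _ = !![1, -1; 0, 1] * (letter false * Y) := by rw [h]
    _ = (!![1, -1; 0, 1] * letter false) * Y := by rw [mul_assoc]
    _ = Y := by rw [hinv, one_mul]
  · have hinv : (!![1, 0; -1, 1] : Matrix (Fin 2) (Fin 2) ℤ) * letter true = 1 := by
      rw [Matrix.one_fin_two]; norm_num [letter, matA, Matrix.mul_fin_two]
    calc X = (!![1, 0; -1, 1] * letter true) * X := by rw [hinv, one_mul]
    _ = !![1, 0; -1, 1] * (letter true * X) := by rw [mul_assoc]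
    _ = !![1, 0; -1, 1] * (letter true * Y) := by rw [h]
    _ = (!![1, 0; -1, 1] * letter true) * Y := by rw [mul_assoc]
    _ = Y := by rw [hinv, one_mul]

lemma ne_one (b : Bool) (t : List Bool) : P (b :: t) ≠ 1 := by
  obtain ⟨h1, h2, h3, h4⟩ := good t
  have hP : P (b :: t) = letter b * P t := by simp [P]
  intro h
  cases b
  · -- B * M, entry (0,1) = M 0 1 + M 1 1 > 0 but = 0
    have := congrFun (congrFun (hP ▸ h) 0) 1
    simp [letter, matB, Matrix.mul_apply, Fin.sum_univ_two, Matrix.one_apply] at this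
    linarith
  · have := congrFun (congrFun (hP ▸ h) 1) 0
    simp [letter, matA, Matrix.mul_apply, Fin.sum_univ_two, Matrix.one_apply] at this
    linarith

lemma no_mix (t₁ t₂ : List Bool) : P (true :: t₁) ≠ P (false :: t₂) := by
  obtain ⟨p1, p2, p3, p4⟩ := good t₁
  obtain ⟨q1, q2, q3, q4⟩ := good t₂
  intro h
  have h00 := congrFun (congrFun h 0) 0
  have h10 := congrFun (congrFun h 1) 0
  simp only [P, List.map_cons, List.prod_cons, letter, if_true, if_false, matA, matB,
    Matrix.mul_apply, Fin.sum_univ_two, Matrix.cons_val_zero, Matrix.cons_val_one,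
    Matrix.head_cons, Matrix.head_fin_const] at h00 h10
  simp at h00 h10
  linarith

end FreeAB

/-- The monoid generated by A and B is free on {A, B}: two words in the letters
A and B having equal products must be equal. -/
theorem stmt_0 (w₁ w₂ : List Bool)
    (h : (w₁.map letter).prod = (w₂.map letter).prod) : w₁ = w₂ := by
  induction w₁ generalizing w₂ with
  | nil =>
    cases w₂ with
    | nil => rfl
    | cons b t => exact absurd h.symm (FreeAB.ne_one b t)
  | cons b t ih =>
    cases w₂ with
    | nil => exact absurd h (FreeAB.ne_one b t)
    | cons b' t' =>
      have hbb : b = b' := by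
        by_contra hne
        cases b <;> cases b' <;> simp_all
        · exact FreeAB.no_mix t' t h.symm
        · exact FreeAB.no_mix t t' h
      subst hbb
      have : (t.map letter).prod = (t'.map letter).prod := by
        apply FreeAB.cancel b
        simpa using h
      rw [ih t' this]
end

section
/- Every integer matrix [[q', q],[p', p]] with 0 ≤ p ≤ q < q', 0 ≤ p' ≤ q', and pq' − p'q = 1 can be written as a product M(a₁)M(a₂)⋯M(a₂ₘ) of an even number of matrices M(aᵢ) = [[aᵢ,1],[1,0]] with positive integers aᵢ. -/
def matM (a : ℕ) : Matrix (Fin 2) (Fin 2) ℤ := !![(a : ℤ), 1; 1, 0]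

lemma etaM {a b c d e f g h : ℤ} (h1 : a = e) (h2 : b = f) (h3 : c = g) (h4 : d = h) :
    !![a, b; c, d] = !![e, f; g, h] := by rw [h1, h2, h3, h4]

lemma matM_int_mul (a p' p r s : ℤ) (ha : 0 ≤ a) :
    matM a.toNat * !![p', p; r, s] = !![a*p' + r, a*p + s; p', p] := by
  have h : ((a.toNat : ℕ) : ℤ) = a := Int.toNat_of_nonneg ha
  rw [matM, h, Matrix.mul_fin_two]
  norm_num

lemma key : ∀ n : ℕ, ∀ p q p' q' : ℤ,
    (q' ≤ n → 0 ≤ p → p ≤ q → q < q' → 0 ≤ p' → p' ≤ q' → p*q' - p'*q = 1 →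
      ∃ l : List ℕ, l ≠ [] ∧ Even l.length ∧ (∀ x ∈ l, 0 < x) ∧
        (l.map matM).prod = !![q', q; p', p])
    ∧ (q' ≤ n → 0 ≤ p → p < q → q ≤ q' → 0 ≤ p' → p' ≤ q' → p*q' - p'*q = -1 →
      ∃ l : List ℕ, l ≠ [] ∧ Odd l.length ∧ (∀ x ∈ l, 0 < x) ∧
        (l.map matM).prod = !![q', q; p', p]) := by
  intro n
  induction n with
  | zero =>
    intro p q p' q'
    constructor
    · intro hn hp hpq hqq' _ _ _
      exfalso; norm_num at hn; omega
    · intro hn hp hpq hqq' _ _ _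
      exfalso; norm_num at hn; omega
  | succ n IH =>
    intro p q p' q'
    constructor
    · -- even case, det = 1
      intro hn hp hpq hqq' hp' hp'q' hdet
      have hp1 : 1 ≤ p := by
        rcases hp.lt_or_eq with h | h
        · omega
        · exfalso; nlinarith [mul_nonneg hp' (hp.trans hpq)]
      rcases eq_or_lt_of_le hpq with heq | hlt
      · -- base case p = q
        subst heq
        have hk : p * (q' - p') = 1 := by linear_combination hdet
        have h1 : p = 1 ∧ q' - p' = 1 := by
          rcases Int.mul_eq_one_iff_eq_one_or_neg_one.mp hk with ⟨e1, e2⟩ | ⟨e1, e2⟩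
          · exact ⟨e1, e2⟩
          · omega
        obtain ⟨h1, h2⟩ := h1
        have hp'1 : 1 ≤ p' := by omega
        refine ⟨[1, p'.toNat], by simp, ⟨1, rfl⟩, ?_, ?_⟩
        · intro x hx; simp at hx; rcases hx with h | h <;> omega
        · have hm1 : matM 1 = !![(1:ℤ), 1; 1, 0] := by rw [matM]; norm_num
          have hm2 : matM p'.toNat = !![(p':ℤ), 1; 1, 0] := by
            rw [matM, Int.toNat_of_nonneg hp']
          simp only [List.map_cons, List.map_nil, List.prod_cons, List.prod_nil, mul_one]
          rw [hm1, hm2, Matrix.mul_fin_two]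
          exact etaM (by linarith) (by linarith) (by ring) (by linarith)
      · -- inductive case p < q
        have hp'1 : 1 ≤ p' := by
          rcases hp'.lt_or_eq with h | h
          · omega
          · exfalso
            have e0 : p' * q = 0 := by rw [← h, zero_mul]
            nlinarith [mul_le_mul hp1 (show (2:ℤ) ≤ q' by linarith)
              (by linarith) hp]
        have hp'q'lt : p' < q' := by
          by_contra h
          push_neg at h
          nlinarith [mul_le_mul_of_nonneg_right h (hp.trans hpq),
            mul_le_mul_of_nonneg_left (show p + 1 ≤ q by linarith)
              (show (0:ℤ) ≤ q' by linarith)]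
        have hpp' : p ≤ p' := by
          by_contra h
          push_neg at h
          nlinarith [mul_le_mul_of_nonneg_left hqq'.le hp',
            mul_le_mul_of_nonneg_right (show 1 ≤ p - p' by linarith)
              (show (0:ℤ) ≤ q' by linarith)]
        set a : ℤ := (q' - 1) / p' with ha_def
        set r : ℤ := (q' - 1) % p' + 1 with hr_def
        have hmod : 0 ≤ (q' - 1) % p' := Int.emod_nonneg (q' - 1) (by omega)
        have hmod2 : (q' - 1) % p' < p' := Int.emod_lt_of_pos (q' - 1) (by omega)
        have hdiv := Int.mul_ediv_add_emod (q' - 1) p'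
        have har : a * p' + r = q' := by
          rw [hr_def, ha_def]; linear_combination hdiv
        have hr1 : 1 ≤ r := by omega
        have hr2 : r ≤ p' := by omega
        have ha1 : 1 ≤ a := by
          by_contra h
          push_neg at h
          have h0 : a ≤ 0 := by omega
          have hap : a * p' ≤ 0 :=
            mul_nonpos_iff.mpr (Or.inr ⟨h0, by linarith⟩)
          linarith
        set s : ℤ := q - a * p with hs_def
        have hdetB : s * p' - r * p = -1 := by
          linear_combination p' * hs_def - p * har - hdet
        have hs0 : 0 ≤ s := by
          have h1 : 0 * p' ≤ s * p' := by nlinarith [mul_le_mul hr1 hp1 (by linarith) (by linarith)]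
          exact le_of_mul_le_mul_right h1 (by omega)
        have hsp : s < p := by
          have h1 : s * p' < p * p' := by
            nlinarith [mul_le_mul_of_nonneg_right hr2 hp]
          exact lt_of_mul_lt_mul_right h1 (by omega)
        obtain ⟨l, hlne, hlodd, hlpos, hlprod⟩ :=
          (IH s p r p').2 (by omega) hs0 hsp hpp' (by omega) hr2 hdetB
        refine ⟨a.toNat :: l, by simp, ?_, ?_, ?_⟩
        · simp only [List.length_cons]; exact hlodd.add_one
        · intro x hx
          rcases List.mem_cons.mp hx with h | h
          · subst h; omega
          · exact hlpos x h
        · rw [List.map_cons, List.prod_cons, hlprod,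
            matM_int_mul a p' p r s (by omega)]
          exact etaM har (by linarith [hs_def]) rfl rfl
    · -- odd case, det = -1
      intro hn hp hpq hqq' hp' hp'q' hdet
      rcases hp.lt_or_eq with hp1 | heq
      swap
      · -- base case p = 0
        have hk : p' * q = 1 := by linear_combination -hdet - q' * heq
        have h1 : p' = 1 ∧ q = 1 := by
          rcases Int.mul_eq_one_iff_eq_one_or_neg_one.mp hk with ⟨e1, e2⟩ | ⟨e1, e2⟩
          · exact ⟨e1, e2⟩
          · omega
        obtain ⟨h1, h2⟩ := h1
        refine ⟨[q'.toNat], by simp, ⟨0, rfl⟩, ?_, ?_⟩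
        · intro x hx; simp at hx; omega
        · simp only [List.map_cons, List.map_nil, List.prod_cons, List.prod_nil, mul_one]
          rw [matM, Int.toNat_of_nonneg (by omega : (0:ℤ) ≤ q')]
          exact etaM rfl (by omega) (by omega) (by omega)
      · -- inductive case 1 ≤ p
        have hp'1 : 1 ≤ p' := by
          rcases hp'.lt_or_eq with h | h
          · omega
          · exfalso
            nlinarith [mul_nonneg hp1.le (show (0:ℤ) ≤ q' by linarith)]
        have hpp' : p < p' := by
          by_contra h
          push_neg at h
          nlinarith [mul_le_mul_of_nonneg_right h (show (0:ℤ) ≤ q' by linarith),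
            mul_nonneg hp' (show (0:ℤ) ≤ q' - q by linarith)]
        have hp'q'lt : p' < q' := by
          by_contra h
          push_neg at h
          have hq'p : p' = q' := le_antisymm hp'q' h
          have hk : q' * (q - p) = 1 := by linear_combination -hdet - q * hq'p
          rcases Int.mul_eq_one_iff_eq_one_or_neg_one.mp hk with ⟨e1, e2⟩ | ⟨e1, e2⟩ <;> omega
        set a : ℤ := q' / p' with ha_def
        set r : ℤ := q' % p' with hr_def
        have hr1 : 0 ≤ r := Int.emod_nonneg q' (by omega)
        have hr2 : r < p' := Int.emod_lt_of_pos q' (by omega)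
        have hdiv := Int.mul_ediv_add_emod q' p'
        have har : a * p' + r = q' := by
          rw [hr_def, ha_def]; linear_combination hdiv
        have ha1 : 1 ≤ a := by
          by_contra h
          push_neg at h
          have h0 : a ≤ 0 := by omega
          have hap : a * p' ≤ 0 :=
            mul_nonpos_iff.mpr (Or.inr ⟨h0, by linarith⟩)
          linarith
        set s : ℤ := q - a * p with hs_def
        have hdetC : s * p' - r * p = 1 := by
          linear_combination p' * hs_def - p * har - hdet
        have hs0 : 0 ≤ s := by
          have h1 : 0 * p' ≤ s * p' := by nlinarith [mul_nonneg hr1 hp]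
          exact le_of_mul_le_mul_right h1 (by omega)
        have hsp : s ≤ p := by
          have h1 : s * p' ≤ p * p' := by
            nlinarith [mul_le_mul_of_nonneg_right (show r ≤ p' - 1 by omega) hp]
          exact le_of_mul_le_mul_right h1 (by omega)
        obtain ⟨l, hlne, hleven, hlpos, hlprod⟩ :=
          (IH s p r p').1 (by omega) hs0 hsp hpp' hr1 (by omega) hdetC
        refine ⟨a.toNat :: l, by simp, ?_, ?_, ?_⟩
        · simp only [List.length_cons]; exact hleven.add_one
        · intro x hx
          rcases List.mem_cons.mp hx with h | h
          · subst h; omega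
          · exact hlpos x h
        · rw [List.map_cons, List.prod_cons, hlprod,
            matM_int_mul a p' p r s (by omega)]
          exact etaM har (by linarith [hs_def]) rfl rfl

/-- Every integer matrix `[[q', q],[p', p]]` with `0 ≤ p ≤ q < q'`, `0 ≤ p' ≤ q'`
and `p q' − p' q = 1` is a product of an even (positive) number of matrices
`M(aᵢ)` with positive integers `aᵢ`. -/
theorem stmt_7 (p q p' q' : ℤ)
    (hp : 0 ≤ p) (hpq : p ≤ q) (hqq' : q < q') (hp' : 0 ≤ p') (hp'q' : p' ≤ q')
    (hdet : p * q' - p' * q = 1) :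
    ∃ l : List ℕ, l ≠ [] ∧ Even l.length ∧ (∀ x ∈ l, 0 < x) ∧
      (l.map matM).prod = !![q', q; p', p] := by
  exact (key q'.toNat p q p' q').1 (by omega) hp hpq hqq' hp' hp'q' hdet
end

section
/- Let Ψ(N) be the number of products of matrices A = [[1,0],[1,1]] and B = [[1,1],[0,1]] (words in the free monoid on {A,B} of length ≥ 1) whose trace is at most N, let Ψ_ev(N) count such products of even word length beginning with A and ending with B, and let Ψ_odd(N) count those of odd word length beginning and ending with B. Then Ψ(N) = 2Ψ_ev(N) + 2Ψ_odd(N). -/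
/-- The word in the monoid generated by A, B indexed by a list of letters
(`true ↦ A`, `false ↦ B`). -/
def wordProd (l : List Bool) : Matrix (Fin 2) (Fin 2) ℤ :=
  (l.map (fun b => if b then matA else matB)).prod

/-- The alternating product `X^{a₁} Y^{a₂} X^{a₃} ⋯` attached to a list of
positive exponents. -/
def altProd (X Y : Matrix (Fin 2) (Fin 2) ℤ) : List ℕ → Matrix (Fin 2) (Fin 2) ℤ
  | [] => 1
  | a :: t => X ^ a * altProd Y X t

/-- `Ψ(N) = Σ_{n=3}^N Φ(n)`: the number of nonempty words in A, B whose trace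
lies in `[3, N]` (every word other than a pure power of A or B has trace ≥ 3,
and pure powers have trace 2). -/
noncomputable def PsiTot (N : ℤ) : ℕ :=
  Nat.card {l : List Bool // l ≠ [] ∧ 3 ≤ (wordProd l).trace ∧ (wordProd l).trace ≤ N}

/-- `Ψ_ev(N)`: the number of words `A^{a₁} B^{a₂} ⋯ A^{a₂ₘ₋₁} B^{a₂ₘ}` (even
block length, beginning with A and ending with B, `m ≥ 1`) of trace at most `N`. -/
noncomputable def PsiEv (N : ℤ) : ℕ :=
  Nat.card {l : List ℕ // l ≠ [] ∧ Even l.length ∧ (∀ x ∈ l, 0 < x) ∧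
    (altProd matA matB l).trace ≤ N}

/-- `Ψ_odd(N)`: the number of words `B^{a₁} A^{a₂} ⋯ A^{a₂ₘ} B^{a₂ₘ₊₁}` (odd
block length, beginning and ending with B, `m ≥ 1`) of trace at most `N`. -/
noncomputable def PsiOdd (N : ℤ) : ℕ :=
  Nat.card {l : List ℕ // Odd l.length ∧ 3 ≤ l.length ∧ (∀ x ∈ l, 0 < x) ∧
    (altProd matB matA l).trace ≤ N}

/-!
Conjugation by `J = !![0, 1; 1, 0]` exchanges `A` and `B`, so exchanging the letters of a word
preserves its trace. Every word of trace `≥ 3` contains both letters, and sorting such words by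
their first and last letters, the letter exchange pairs `A⋯B` with `B⋯A` and `A⋯A` with `B⋯B`.
Reading off the block exponents, the words `A⋯B` are exactly the products counted by `Ψ_ev`, and
the words `B⋯B` of trace `≥ 3` are those counted by `Ψ_odd`.

The counts are finite, which matters because `Nat.card` of an infinite type is `0`: the entry sum
of a word grows by at least one with each letter, while a nonnegative integer matrix of
determinant `1` and trace `t ≥ 3` has entry sum at most `t ^ 2 + t`.
-/

open Matrix

lemma wordProd_cons (x : Bool) (l : List Bool) :
    wordProd (x :: l) = (if x then matA else matB) * wordProd l := by
  simp [wordProd]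

lemma wordProd_append (l₁ l₂ : List Bool) :
    wordProd (l₁ ++ l₂) = wordProd l₁ * wordProd l₂ := by
  simp [wordProd]

lemma wordProd_replicate (a : ℕ) (c : Bool) :
    wordProd (List.replicate a c) = (if c then matA else matB) ^ a := by
  simp [wordProd, List.map_replicate]

lemma det_wordProd (l : List Bool) : (wordProd l).det = 1 := by
  induction l with
  | nil => simp [wordProd]
  | cons x l ih =>
    rw [wordProd_cons, det_mul, ih]
    cases x <;> simp [matA, matB, det_fin_two_of]

lemma wordProd_entry_bounds (l : List Bool) :
    1 ≤ wordProd l 0 0 ∧ 0 ≤ wordProd l 0 1 ∧ 0 ≤ wordProd l 1 0 ∧ 1 ≤ wordProd l 1 1 := by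
  induction l with
  | nil => simp [wordProd]
  | cons x l ih =>
    cases x <;> simp [wordProd_cons, matA, matB, mul_apply, Fin.sum_univ_two] <;> omega

lemma trace_eq_two_of_det_eq_one {M : Matrix (Fin 2) (Fin 2) ℤ} (hdet : M.det = 1)
    (h00 : 0 ≤ M 0 0) (h11 : 0 ≤ M 1 1) (hoff : M 0 1 * M 1 0 = 0) : M.trace = 2 := by
  rw [det_fin_two, hoff, sub_zero] at hdet
  rw [trace_fin_two, Int.eq_one_of_mul_eq_one_right h00 hdet,
    Int.eq_one_of_mul_eq_one_left h11 hdet]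
  rfl

lemma one_le_wordProd_one_zero {l : List Bool} (h : true ∈ l) : 1 ≤ wordProd l 1 0 := by
  induction l with
  | nil => simp at h
  | cons x l ih =>
    obtain ⟨h00, -, h10, -⟩ := wordProd_entry_bounds l
    cases x
    · simpa [wordProd_cons, matB, mul_apply] using ih (by simpa using h)
    · simp [wordProd_cons, matA, mul_apply]
      omega

lemma one_le_wordProd_zero_one {l : List Bool} (h : false ∈ l) : 1 ≤ wordProd l 0 1 := by
  induction l with
  | nil => simp at h
  | cons x l ih =>
    obtain ⟨-, h01, -, h11⟩ := wordProd_entry_bounds l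
    cases x
    · simp [wordProd_cons, matB, mul_apply]
      omega
    · simpa [wordProd_cons, matA, mul_apply] using ih (by simpa using h)

lemma wordProd_one_zero_eq_zero {l : List Bool} (h : true ∉ l) : wordProd l 1 0 = 0 := by
  induction l with
  | nil => simp [wordProd]
  | cons x l ih => cases x <;> simp_all [wordProd_cons, matB, mul_apply, Fin.sum_univ_two]

lemma wordProd_zero_one_eq_zero {l : List Bool} (h : false ∉ l) : wordProd l 0 1 = 0 := by
  induction l with
  | nil => simp [wordProd]
  | cons x l ih => cases x <;> simp_all [wordProd_cons, matA, mul_apply, Fin.sum_univ_two]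

lemma three_le_trace_wordProd_iff {l : List Bool} :
    3 ≤ (wordProd l).trace ↔ true ∈ l ∧ false ∈ l := by
  have hdet := det_wordProd l
  obtain ⟨h00, -, -, h11⟩ := wordProd_entry_bounds l
  constructor
  · intro h3
    by_contra! hl
    have hoff : wordProd l 0 1 * wordProd l 1 0 = 0 := by
      by_cases ht : true ∈ l
      · rw [wordProd_zero_one_eq_zero (hl ht), zero_mul]
      · rw [wordProd_one_zero_eq_zero ht, mul_zero]
    have := trace_eq_two_of_det_eq_one hdet (by omega) (by omega) hoff
    omega
  · rintro ⟨ht, hf⟩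
    have h10 := one_le_wordProd_one_zero ht
    have h01 := one_le_wordProd_zero_one hf
    rw [det_fin_two] at hdet
    rw [trace_fin_two]
    nlinarith

lemma length_add_two_le_sum_wordProd (l : List Bool) :
    (l.length : ℤ) + 2 ≤ wordProd l 0 0 + wordProd l 0 1 + wordProd l 1 0 + wordProd l 1 1 := by
  induction l with
  | nil => simp [wordProd]
  | cons x l ih =>
    have := wordProd_entry_bounds l
    cases x <;> simp [wordProd_cons, matA, matB, mul_apply, Fin.sum_univ_two] <;> omega

lemma sum_entries_le_of_det_eq_one {M : Matrix (Fin 2) (Fin 2) ℤ} (hdet : M.det = 1)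
    (hM : ∀ i j, 0 ≤ M i j) (htr : 3 ≤ M.trace) :
    M 0 0 + M 0 1 + M 1 0 + M 1 1 ≤ M.trace ^ 2 + M.trace := by
  have hbc : M 0 1 * M 1 0 ≠ 0 := fun hbc => by
    have := trace_eq_two_of_det_eq_one hdet (hM 0 0) (hM 1 1) hbc
    omega
  rw [det_fin_two] at hdet
  rw [trace_fin_two] at htr ⊢
  obtain ⟨hb, hc⟩ := mul_ne_zero_iff.1 hbc
  have hb : 1 ≤ M 0 1 := by have := hM 0 1; omega
  have hc : 1 ≤ M 1 0 := by have := hM 1 0; omega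
  have h00 := hM 0 0; have h11 := hM 1 1
  nlinarith [mul_nonneg (sub_nonneg.2 hb) (sub_nonneg.2 hc)]

lemma wordProd_nonneg (l : List Bool) (i j : Fin 2) : 0 ≤ wordProd l i j := by
  obtain ⟨h00, h01, h10, h11⟩ := wordProd_entry_bounds l
  fin_cases i <;> fin_cases j <;> simp <;> omega

lemma finite_setOf_trace_le (N : ℤ) :
    {l : List Bool | 3 ≤ (wordProd l).trace ∧ (wordProd l).trace ≤ N}.Finite := by
  refine (List.finite_length_le Bool (N ^ 2 + N).toNat).subset fun l ⟨h3, hN⟩ => ?_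
  have hlen := length_add_two_le_sum_wordProd l
  have hsum := sum_entries_le_of_det_eq_one (det_wordProd l) (wordProd_nonneg l) h3
  have hsq : (wordProd l).trace ^ 2 ≤ N ^ 2 := pow_le_pow_left₀ (by omega) hN 2
  show l.length ≤ _
  omega

def blockWord : Bool → List ℕ → List Bool
  | _, [] => []
  | c, a :: t => List.replicate a c ++ blockWord (!c) t

lemma wordProd_blockWord (e : List ℕ) :
    wordProd (blockWord true e) = altProd matA matB e ∧
      wordProd (blockWord false e) = altProd matB matA e := by
  induction e with
  | nil => simp [blockWord, altProd, wordProd]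
  | cons a t ih => simp [blockWord, altProd, wordProd_append, wordProd_replicate, ih]

lemma blockWord_eq_nil {c : Bool} {e : List ℕ} (he : ∀ x ∈ e, 0 < x) :
    blockWord c e = [] ↔ e = [] := by
  cases e with
  | nil => simp [blockWord]
  | cons a t => simp [blockWord, (he a List.mem_cons_self).ne']

lemma head?_blockWord_cons {c : Bool} {a : ℕ} (ha : 0 < a) (t : List ℕ) :
    (blockWord c (a :: t)).head? = some c := by
  obtain ⟨a, rfl⟩ := Nat.exists_eq_add_of_lt ha
  simp [blockWord, List.replicate_succ]

lemma head?_blockWord_ne {c : Bool} {e : List ℕ} (he : ∀ x ∈ e, 0 < x) :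
    (blockWord c e).head? ≠ some (!c) := by
  cases e with
  | nil => simp [blockWord]
  | cons a t => simp [head?_blockWord_cons (he a List.mem_cons_self)]

lemma getLast?_blockWord {c : Bool} {e : List ℕ} (he : ∀ x ∈ e, 0 < x) (hne : e ≠ []) :
    (blockWord c e).getLast? = some (if Even e.length then !c else c) := by
  induction e generalizing c with
  | nil => exact absurd rfl hne
  | cons a t ih =>
    have ha := he a List.mem_cons_self
    rcases eq_or_ne t [] with rfl | ht
    · simp [blockWord, List.getLast?_replicate, ha.ne']
    · rw [blockWord, List.getLast?_append, ih (fun x hx => he x (List.mem_cons_of_mem a hx)) ht]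
      cases c <;> simp [Nat.even_add_one, -Nat.not_even_iff_odd]

lemma mem_blockWord_of_two_le_length {c : Bool} {e : List ℕ} (he : ∀ x ∈ e, 0 < x)
    (h2 : 2 ≤ e.length) (b : Bool) : b ∈ blockWord c e := by
  obtain _ | ⟨a, _ | ⟨a', t⟩⟩ := e
  · simp at h2
  · simp at h2
  · have ha := he a (by simp)
    have ha' := he a' (by simp)
    cases b <;> cases c <;> simp [blockWord, ha.ne', ha'.ne']

lemma List.replicate_append_inj {α : Type*} {c : α} {a a' : ℕ} {u u' : List α}
    (hu : u.head? ≠ some c) (hu' : u'.head? ≠ some c)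
    (h : List.replicate a c ++ u = List.replicate a' c ++ u') : a = a' ∧ u = u' := by
  induction a generalizing a' with
  | zero =>
    cases a' with
    | zero => simpa using h
    | succ a' =>
      simp only [List.replicate_zero, List.nil_append] at h
      simp [h, List.replicate_succ] at hu
  | succ a ih =>
    cases a' with
    | zero =>
      simp only [List.replicate_zero, List.nil_append] at h
      simp [← h, List.replicate_succ] at hu'
    | succ a' => simpa using ih (by simpa [List.replicate_succ] using h)

lemma blockWord_injOn (c : Bool) : Set.InjOn (blockWord c) {e | ∀ x ∈ e, 0 < x} := by
  intro e he e' he' h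
  induction e generalizing c e' with
  | nil => exact ((blockWord_eq_nil he').1 h.symm).symm
  | cons a t ih =>
    cases e' with
    | nil => exact absurd ((blockWord_eq_nil he).1 h) (List.cons_ne_nil a t)
    | cons a' t' =>
      have ht : ∀ x ∈ t, 0 < x := fun x hx => he x (List.mem_cons_of_mem a hx)
      have ht' : ∀ x ∈ t', 0 < x := fun x hx => he' x (List.mem_cons_of_mem a' hx)
      obtain ⟨rfl, htt⟩ := List.replicate_append_inj
        (by simpa using head?_blockWord_ne (c := !c) ht)
        (by simpa using head?_blockWord_ne (c := !c) ht') h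
      rw [ih (!c) ht ht' htt]

lemma exists_blockWord {l : List Bool} {c : Bool} (hl : l.head? = some c) :
    ∃ e, (∀ x ∈ e, 0 < x) ∧ blockWord c e = l := by
  induction l generalizing c with
  | nil => simp at hl
  | cons x t ih =>
    obtain rfl : x = c := by simpa using hl
    cases t with
    | nil => exact ⟨[1], by simp, by simp [blockWord]⟩
    | cons y s =>
      obtain ⟨_ | ⟨a, r⟩, he, hblock⟩ := ih (c := y) rfl
      · simp [blockWord] at hblock
      by_cases hy : y = x
      · subst hy
        refine ⟨(a + 1) :: r, ?_, ?_⟩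
        · simp_all
        · simp [blockWord, List.replicate_succ, ← hblock]
      · have hy : y = !x := by cases x <;> cases y <;> simp_all
        subst hy
        refine ⟨1 :: a :: r, ?_, ?_⟩
        · simpa using he
        · simp [blockWord, ← hblock]

def matJ : Matrix (Fin 2) (Fin 2) ℤ := !![0, 1; 1, 0]

lemma matJ_mul_matJ : matJ * matJ = 1 := by
  simp [matJ, one_fin_two]

lemma wordProd_map_not (l : List Bool) : wordProd (l.map not) = matJ * wordProd l * matJ := by
  induction l with
  | nil => simp [wordProd, matJ, one_fin_two]
  | cons x l ih =>
    rw [List.map_cons, wordProd_cons, wordProd_cons, ih, eta_fin_two (wordProd l)]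
    cases x <;> simp [matA, matB, matJ] <;> constructor <;> ring

lemma trace_wordProd_map_not (l : List Bool) :
    (wordProd (l.map not)).trace = (wordProd l).trace := by
  rw [wordProd_map_not, trace_mul_comm, ← Matrix.mul_assoc, matJ_mul_matJ, Matrix.one_mul]

def wordsWithEnds (N : ℤ) (c d : Bool) : Set (List Bool) :=
  {l | l.head? = some c ∧ l.getLast? = some d ∧ 3 ≤ (wordProd l).trace ∧
    (wordProd l).trace ≤ N}

lemma image_map_not_wordsWithEnds (N : ℤ) (c d : Bool) :
    List.map not '' wordsWithEnds N c d = wordsWithEnds N (!c) (!d) := by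
  rw [Set.image_eq_preimage_of_inverse (f := List.map not) (g := List.map not)
    (fun l => by simp [Function.comp_def]) (fun l => by simp [Function.comp_def])]
  ext l
  simp [wordsWithEnds, List.head?_map, List.getLast?_map, trace_wordProd_map_not]

lemma ncard_wordsWithEnds_not (N : ℤ) (c d : Bool) :
    (wordsWithEnds N (!c) (!d)).ncard = (wordsWithEnds N c d).ncard := by
  rw [← image_map_not_wordsWithEnds,
    Set.ncard_image_of_injective _ (List.map_injective_iff.2 Bool.not_injective)]

lemma image_blockWord_even (N : ℤ) :
    blockWord true '' {e | e ≠ [] ∧ Even e.length ∧ (∀ x ∈ e, 0 < x) ∧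
      (altProd matA matB e).trace ≤ N} = wordsWithEnds N true false := by
  ext l
  constructor
  · rintro ⟨e, ⟨hne, hev, hpos, hN⟩, rfl⟩
    have h2 : 2 ≤ e.length := by
      obtain ⟨k, hk⟩ := hev
      have := List.length_pos_iff.2 hne
      omega
    obtain ⟨a, t, rfl⟩ := List.exists_cons_of_ne_nil hne
    refine ⟨head?_blockWord_cons (hpos a List.mem_cons_self) t, ?_, ?_, ?_⟩
    · simpa [getLast?_blockWord hpos hne] using hev
    · exact three_le_trace_wordProd_iff.2 ⟨mem_blockWord_of_two_le_length hpos h2 _,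
        mem_blockWord_of_two_le_length hpos h2 _⟩
    · rwa [(wordProd_blockWord _).1]
  · rintro ⟨hhead, hlast, -, hN⟩
    obtain ⟨e, hpos, rfl⟩ := exists_blockWord hhead
    have hne : e ≠ [] := by rintro rfl; simp [blockWord] at hhead
    rw [getLast?_blockWord hpos hne] at hlast
    refine ⟨e, ⟨hne, ?_, hpos, by rwa [← (wordProd_blockWord e).1]⟩, rfl⟩
    by_contra h
    simp [h] at hlast

lemma image_blockWord_odd (N : ℤ) :
    blockWord false '' {e | Odd e.length ∧ 3 ≤ e.length ∧ (∀ x ∈ e, 0 < x) ∧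
      (altProd matB matA e).trace ≤ N} = wordsWithEnds N false false := by
  ext l
  constructor
  · rintro ⟨e, ⟨hodd, h3, hpos, hN⟩, rfl⟩
    have hne : e ≠ [] := by rintro rfl; simp at h3
    obtain ⟨a, t, rfl⟩ := List.exists_cons_of_ne_nil hne
    refine ⟨head?_blockWord_cons (hpos a List.mem_cons_self) t, ?_, ?_, ?_⟩
    · simpa [getLast?_blockWord hpos hne] using hodd
    · exact three_le_trace_wordProd_iff.2 ⟨mem_blockWord_of_two_le_length hpos (by omega) _,
        mem_blockWord_of_two_le_length hpos (by omega) _⟩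
    · rwa [(wordProd_blockWord _).2]
  · rintro ⟨hhead, hlast, h3, hN⟩
    obtain ⟨e, hpos, rfl⟩ := exists_blockWord hhead
    have hne : e ≠ [] := by rintro rfl; simp [blockWord] at hhead
    rw [getLast?_blockWord hpos hne] at hlast
    have hodd : Odd e.length := by
      by_contra h
      simp [Nat.not_odd_iff_even.1 h] at hlast
    refine ⟨e, ⟨hodd, ?_, hpos, by rwa [← (wordProd_blockWord e).2]⟩, rfl⟩
    obtain _ | ⟨a, _ | ⟨a', t⟩⟩ := e
    · exact absurd rfl hne
    · simp [three_le_trace_wordProd_iff, blockWord] at h3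
    · obtain ⟨k, hk⟩ := hodd
      simp only [List.length_cons] at hk ⊢
      omega

lemma disjoint_wordsWithEnds {N : ℤ} {c d c' d' : Bool} (h : (c, d) ≠ (c', d')) :
    Disjoint (wordsWithEnds N c d) (wordsWithEnds N c' d') :=
  Set.disjoint_left.2 fun _ ⟨hc, hd, _⟩ ⟨hc', hd', _⟩ => h (by simp_all)

lemma setOf_trace_le_eq_union (N : ℤ) :
    {l : List Bool | l ≠ [] ∧ 3 ≤ (wordProd l).trace ∧ (wordProd l).trace ≤ N} =
      (wordsWithEnds N true false ∪ wordsWithEnds N false true) ∪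
        (wordsWithEnds N true true ∪ wordsWithEnds N false false) := by
  ext l
  rcases l with _ | ⟨x, t⟩
  · simp [wordsWithEnds]
  · obtain ⟨d, hd⟩ : ∃ d, (x :: t).getLast? = some d :=
      ⟨_, List.getLast?_eq_some_getLast (List.cons_ne_nil x t)⟩
    cases x <;> cases d <;> simp [wordsWithEnds, hd]

lemma finite_wordsWithEnds (N : ℤ) (c d : Bool) : (wordsWithEnds N c d).Finite :=
  (finite_setOf_trace_le N).subset fun _ hl => hl.2.2

lemma psiTot_eq_sum_ncard (N : ℤ) :
    PsiTot N = ((wordsWithEnds N true false).ncard + (wordsWithEnds N false true).ncard) +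
      ((wordsWithEnds N true true).ncard + (wordsWithEnds N false false).ncard) := by
  have hdisj : Disjoint (wordsWithEnds N true false ∪ wordsWithEnds N false true)
      (wordsWithEnds N true true ∪ wordsWithEnds N false false) := by
    simp only [Set.disjoint_union_left, Set.disjoint_union_right]
    and_intros <;> exact disjoint_wordsWithEnds (by decide)
  have hfin := finite_wordsWithEnds N
  rw [PsiTot, ← Set.coe_ofPred, Nat.card_coe_set_eq, setOf_trace_le_eq_union,
    Set.ncard_union_eq hdisj ((hfin _ _).union (hfin _ _)) ((hfin _ _).union (hfin _ _)),
    Set.ncard_union_eq (disjoint_wordsWithEnds (by decide)) (hfin _ _) (hfin _ _),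
    Set.ncard_union_eq (disjoint_wordsWithEnds (by decide)) (hfin _ _) (hfin _ _)]

lemma psiEv_eq_ncard (N : ℤ) : PsiEv N = (wordsWithEnds N true false).ncard := by
  rw [← image_blockWord_even, ((blockWord_injOn true).mono fun e he => he.2.2.1).ncard_image]
  rfl

lemma psiOdd_eq_ncard (N : ℤ) : PsiOdd N = (wordsWithEnds N false false).ncard := by
  rw [← image_blockWord_odd, ((blockWord_injOn false).mono fun e he => he.2.2.1).ncard_image]
  rfl

/-- `Ψ(N) = 2 Ψ_ev(N) + 2 Ψ_odd(N)`. -/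
theorem stmt_8 (N : ℤ) : PsiTot N = 2 * PsiEv N + 2 * PsiOdd N := by
  rw [psiTot_eq_sum_ncard, psiEv_eq_ncard, psiOdd_eq_ncard,
    ← ncard_wordsWithEnds_not N true false, ← ncard_wordsWithEnds_not N false false]
  simp only [Bool.not_true, Bool.not_false]
  ring
end

section
/- For every N ≥ 3, the number Ψ_ev(N) of matrices [[q', q],[p', p]] with 0 ≤ p ≤ q < q', 0 ≤ p' ≤ q', pq' − p'q = 1 and p + q' ≤ N equals the number of pairs (q, q') of coprime positive integers with q < q' ≤ N and q' + q̄' ≤ N, where q̄' is the unique integer in {1,…,q} with q'·q̄' ≡ 1 (mod q). -/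
/-- For `N ≥ 3`, the number of matrices `[[q', q],[p', p]]` with
`0 ≤ p ≤ q < q'`, `0 ≤ p' ≤ q'`, `p q' − p' q = 1` and `p + q' ≤ N` equals the
number of pairs `(q, q')` of coprime positive integers with `q < q' ≤ N` and
`q' + q̄' ≤ N`, where `q̄'` is the unique `x ∈ {1,…,q}` with `q' x ≡ 1 (mod q)`
(the pairs are encoded as triples `(q, q', x)` with `x = q̄'`, which is uniquely
determined by the pair). -/
theorem stmt_9 (N : ℤ) (hN : 3 ≤ N) :
    Nat.card {v : ℤ × ℤ × ℤ × ℤ //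
        0 ≤ v.2.2.2 ∧ v.2.2.2 ≤ v.2.1 ∧ v.2.1 < v.1 ∧
        0 ≤ v.2.2.1 ∧ v.2.2.1 ≤ v.1 ∧
        v.2.2.2 * v.1 - v.2.2.1 * v.2.1 = 1 ∧ v.2.2.2 + v.1 ≤ N} =
    Nat.card {w : ℤ × ℤ × ℤ //
        0 < w.1 ∧ w.1 < w.2.1 ∧ w.2.1 ≤ N ∧ IsCoprime w.1 w.2.1 ∧
        1 ≤ w.2.2 ∧ w.2.2 ≤ w.1 ∧ w.2.1 * w.2.2 ≡ 1 [ZMOD w.1] ∧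
        w.2.1 + w.2.2 ≤ N} := by
  apply Nat.card_congr
  refine ⟨fun v => ⟨(v.1.2.1, v.1.1, v.1.2.2.2), ?_⟩,
      fun w => ⟨(w.1.2.1, w.1.1, (w.1.2.2 * w.1.2.1 - 1) / w.1.1, w.1.2.2), ?_⟩, ?_, fun w => rfl⟩
  · obtain ⟨⟨q', q, p', p⟩, hp0, hpq, hqq', hp'0, hp'q', heq, hle⟩ := v
    dsimp only at *
    have hq : 0 < q := by nlinarith
    have hp : 1 ≤ p := by nlinarith
    refine ⟨hq, hqq', by linarith, ⟨-p', p, by linear_combination heq⟩, hp, hpq, ?_, by linarith⟩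
    exact Int.modEq_iff_dvd.2 ⟨-p', by linear_combination -heq⟩
  · obtain ⟨⟨q, q', x⟩, hq, hqq', hq'N, hcop, hx1, hxq, hmod, hle⟩ := w
    dsimp only at *
    obtain ⟨k, hk⟩ := hmod.dvd
    have hk2 : x * q' - 1 = q * (-k) := by linear_combination -hk
    have hd : (x * q' - 1) / q = -k := by rw [hk2, Int.mul_ediv_cancel_left _ hq.ne']
    rw [hd]
    have h1 : 0 ≤ -k := by nlinarith
    have h2 : -k ≤ q' := by nlinarith
    exact ⟨by linarith, hxq, hqq', h1, h2, by linear_combination -hk, by linarith⟩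
  · rintro ⟨⟨q', q, p', p⟩, hp0, hpq, hqq', hp'0, hp'q', heq, hle⟩
    have hq : 0 < q := by nlinarith
    have key : (p * q' - 1) / q = p' := by
      have h : p * q' - 1 = q * p' := by linear_combination heq
      rw [h, Int.mul_ediv_cancel_left _ hq.ne']
    simp [Subtype.ext_iff, key]
end

section
/- For every 0 < c < 1, Σ_{a ≤ N^c} N_a(T̃_{N,a}) = Σ_{a ≤ N^c} (φ(a)/a²)·(N−2a)²/2 + O(N^{1+c}), where T̃_{N,a} = {(x,y) : 0 < x ≤ N−2a, 0 < y ≤ N−2a−x} and N_a(Ω) counts integer points (x,y) in Ω with xy ≡ 1 (mod a). -/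
/-!
For `x` coprime to `a` the solutions `y` of `xy ≡ 1 (mod a)` form one residue class, so row `x`
of the triangle `x, y > 0`, `x + y ≤ M = N - 2a` contains `(M - x)/a + O(1)` of them, while rows
with `gcd(x, a) > 1` contain none. Summation by parts turns `Σ (M - x)/a` over the `x` coprime to
`a` into `(1/a) Σ_{t < M} #{x ≤ t : gcd(x, a) = 1}`, and each of these counts is `φ(a) t/a + O(a)`.
Hence `N_a(T̃_{N,a}) = (φ(a)/a²) M²/2 + O(M)`, and there are at most `N^c` values of `a`.
-/

open scoped Nat

/-- `N_a(T̃_{N,a})`: the number of integer pairs `(x,y)` with `0 < x ≤ N − 2a`,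
`0 < y ≤ N − 2a − x` and `xy ≡ 1 (mod a)`. -/
noncomputable def NaT (N a : ℕ) : ℕ :=
  Nat.card {v : ℤ × ℤ // 0 < v.1 ∧ v.1 ≤ (N : ℤ) - 2 * a ∧
    0 < v.2 ∧ v.2 ≤ (N : ℤ) - 2 * a - v.1 ∧ v.1 * v.2 ≡ 1 [ZMOD (a : ℤ)]}

open Finset Function

namespace Function.Periodic

variable {p : ℕ → Prop} [DecidablePred p] {a : ℕ}

theorem card_filter_Ioc_add_mul (hp : Periodic p a) (t q : ℕ) :
    #{x ∈ Ioc 0 (t + a * q) | p x} = #{x ∈ Ioc 0 t | p x} + q * Nat.count p a := by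
  induction q with
  | zero => simp
  | succ q ih =>
    have hblock : #{x ∈ Ioc (t + a * q) (t + a * q + a) | p x} = Nat.count p a := by
      rw [← Nat.filter_Ico_card_eq_of_periodic (t + a * q + 1) a p hp]
      congr 2
      ext x
      simp only [mem_Ioc, mem_Ico]
      omega
    simp only [card_filter] at *
    rw [mul_add_one, ← add_assoc, ← sum_Ioc_consecutive _ (Nat.zero_le _) (Nat.le_add_right _ a),
      ih, hblock]
    ring

theorem abs_card_filter_Ioc_sub_le (hp : Periodic p a) (ha : 0 < a) (t : ℕ) :
    |(#{x ∈ Ioc 0 t | p x} : ℝ) - Nat.count p a * t / a| ≤ Nat.count p a := by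
  have haR : (0 : ℝ) < a := by exact_mod_cast ha
  have hsplit : (#{x ∈ Ioc 0 t | p x} : ℝ) =
      #{x ∈ Ioc 0 (t % a) | p x} + (t / a : ℕ) * Nat.count p a := by
    exact_mod_cast Nat.mod_add_div t a ▸ hp.card_filter_Ioc_add_mul (t % a) (t / a)
  have ht : (t : ℝ) = (t % a : ℕ) + a * (t / a : ℕ) := by exact_mod_cast (Nat.mod_add_div t a).symm
  have hrem : (#{x ∈ Ioc 0 (t % a) | p x} : ℝ) ≤ Nat.count p a := by
    have hperiod := hp.card_filter_Ioc_add_mul 0 1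
    simp only [zero_add, mul_one, Ioc_self, filter_empty, card_empty, one_mul] at hperiod
    rw [← hperiod]
    exact_mod_cast card_le_card (filter_subset_filter _ (Ioc_subset_Ioc_right (Nat.mod_lt t ha).le))
  have hfrac : (Nat.count p a : ℝ) * (t % a : ℕ) / a ≤ Nat.count p a := by
    rw [div_le_iff₀ haR]
    exact mul_le_mul_of_nonneg_left (by exact_mod_cast (Nat.mod_lt t ha).le) (Nat.cast_nonneg _)
  have hdiff : (#{x ∈ Ioc 0 t | p x} : ℝ) - Nat.count p a * t / a =
      #{x ∈ Ioc 0 (t % a) | p x} - Nat.count p a * (t % a : ℕ) / a := by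
    rw [hsplit, ht]
    field_simp
    ring
  rw [hdiff]
  exact abs_sub_le_of_nonneg_of_le (by positivity) hrem (by positivity) hfrac

end Function.Periodic

theorem Nat.periodic_mul_modEq_one (x a : ℕ) : Periodic (fun y => x * y ≡ 1 [MOD a]) a := by
  intro y
  simp only [Nat.ModEq, Nat.mul_add, Nat.add_mul_mod_self_right]

theorem Nat.count_mul_modEq_one {a : ℕ} (ha : 0 < a) (x : ℕ) :
    Nat.count (fun y => x * y ≡ 1 [MOD a]) a = if x.Coprime a then 1 else 0 := by
  split_ifs with hx
  · have : NeZero a := ⟨ha.ne'⟩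
    have hinv : ∀ y, x * y ≡ 1 [MOD a] ↔ y ≡ ((x : ZMod a)⁻¹).val [MOD a] := by
      intro y
      simp only [← ZMod.natCast_eq_natCast_iff, Nat.cast_mul, Nat.cast_one, ZMod.natCast_zmod_val]
      rw [← ZMod.coe_unitOfCoprime x hx, ZMod.inv_coe_unit, Units.mul_eq_one_iff_inv_eq, eq_comm]
    simp_rw [hinv, Nat.count_modEq_card _ ha, Nat.div_self ha, Nat.mod_self]
    simp
  · exact Nat.count_of_forall_not fun y _ hy => hx (Nat.coprime_of_mul_modEq_one y hy)

theorem Nat.count_coprime_eq_totient (a : ℕ) : Nat.count a.Coprime a = φ a :=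
  (Nat.count_eq_card_filter_range _ _).trans (Nat.totient_eq_card_coprime a).symm

theorem Finset.sum_Ioc_nsmul_eq_sum_range_sum_Ioc {M : Type*} [AddCommMonoid M] (n : ℕ)
    (g : ℕ → M) : ∑ x ∈ Ioc 0 n, (n - x) • g x = ∑ t ∈ range n, ∑ x ∈ Ioc 0 t, g x := by
  calc ∑ x ∈ Ioc 0 n, (n - x) • g x = ∑ x ∈ Ioc 0 n, ∑ _t ∈ Ico x n, g x := by
        simp [sum_const, Nat.card_Ico]
    _ = _ := sum_comm' fun x t => by simp only [mem_Ioc, mem_Ico, mem_range]; omega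

/-- `N_a` of the triangle `x, y > 0`, `x + y ≤ M`, counted row by row. -/
def invPairCount (a M : ℕ) : ℕ :=
  ∑ x ∈ Ioc 0 M, #{y ∈ Ioc 0 (M - x) | x * y ≡ 1 [MOD a]}

theorem NaT_eq_invPairCount (N a : ℕ) : NaT N a = invPairCount a (N - 2 * a) := by
  let toInt : (Σ _ : ℕ, ℕ) ↪ ℤ × ℤ :=
    ⟨fun s => (s.1, s.2), by rintro ⟨x, y⟩ ⟨x', y'⟩ h; simp_all⟩
  have hset : {v : ℤ × ℤ | 0 < v.1 ∧ v.1 ≤ (N : ℤ) - 2 * a ∧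
      0 < v.2 ∧ v.2 ≤ (N : ℤ) - 2 * a - v.1 ∧ v.1 * v.2 ≡ 1 [ZMOD (a : ℤ)]} =
      (((Ioc 0 (N - 2 * a)).sigma
        fun x => {y ∈ Ioc 0 (N - 2 * a - x) | x * y ≡ 1 [MOD a]}).map toInt : Set (ℤ × ℤ)) := by
    ext ⟨x, y⟩
    simp only [Set.mem_ofPred_eq, coe_map, Set.mem_image, mem_coe, mem_sigma, mem_filter, mem_Ioc]
    constructor
    · rintro ⟨hx0, hxM, hy0, hyM, hxy⟩
      lift x to ℕ using hx0.le
      lift y to ℕ using hy0.le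
      refine ⟨⟨x, y⟩, ?_, rfl⟩
      dsimp only
      exact ⟨⟨by omega, by omega⟩, ⟨by omega, by omega⟩,
        Int.natCast_modEq_iff.mp (by exact_mod_cast hxy)⟩
    · rintro ⟨⟨x, y⟩, ⟨⟨hx0, hxM⟩, ⟨hy0, hyM⟩, hxy⟩, h⟩
      simp only [toInt] at h
      obtain ⟨rfl, rfl⟩ := h
      exact ⟨by omega, by omega, by omega, by omega,
        by exact_mod_cast Int.natCast_modEq_iff.mpr hxy⟩
  rw [NaT, ← Set.coe_ofPred, hset, Nat.card_coe_set_eq, Set.ncard_coe_finset, card_map,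
    card_sigma, invPairCount]

theorem abs_invPairCount_sub_sum_card_coprime_le {a : ℕ} (ha : 0 < a) (M : ℕ) :
    |(invPairCount a M : ℝ) - (∑ t ∈ range M, #{x ∈ Ioc 0 t | a.Coprime x} : ℝ) / a| ≤ M := by
  set c : ℕ → ℕ := fun x => Nat.count (fun y => x * y ≡ 1 [MOD a]) a
  have hc_le : ∀ x, c x ≤ 1 := fun x => by
    simp only [c, Nat.count_mul_modEq_one ha]
    split_ifs <;> simp
  have hsum : ∑ t ∈ range M, (#{x ∈ Ioc 0 t | a.Coprime x} : ℝ) =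
      ∑ x ∈ Ioc 0 M, ((c x * (M - x) : ℕ) : ℝ) := by
    rw [← Nat.cast_sum, ← Nat.cast_sum]
    congr 1
    simp_rw [mul_comm (c _), ← smul_eq_mul, sum_Ioc_nsmul_eq_sum_range_sum_Ioc, card_filter,
      c, Nat.count_mul_modEq_one ha, Nat.coprime_comm]
  have hrow : ∀ x ∈ Ioc 0 M, |(#{y ∈ Ioc 0 (M - x) | x * y ≡ 1 [MOD a]} : ℝ)
      - (c x * (M - x) : ℕ) / a| ≤ 1 := fun x _ => by
    push_cast
    exact ((Nat.periodic_mul_modEq_one x a).abs_card_filter_Ioc_sub_le ha (M - x)).trans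
      (by exact_mod_cast hc_le x)
  rw [hsum, invPairCount, Nat.cast_sum, sum_div, ← sum_sub_distrib]
  calc _ ≤ ∑ x ∈ Ioc 0 M, (1 : ℝ) := (abs_sum_le_sum_abs _ _).trans (sum_le_sum hrow)
    _ = M := by simp

theorem abs_sum_range_card_coprime_sub_le {a : ℕ} (ha : 0 < a) (M : ℕ) :
    |(∑ t ∈ range M, #{x ∈ Ioc 0 t | a.Coprime x} : ℝ) - (φ a : ℝ) * M ^ 2 / (2 * a)| ≤
      (2 * a * M : ℝ) := by
  have ha1 : (1 : ℝ) ≤ a := by exact_mod_cast ha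
  have hφ : (φ a : ℝ) ≤ a := by exact_mod_cast Nat.totient_le a
  have hM : (0 : ℝ) ≤ M := M.cast_nonneg
  have hterm : ∀ t ∈ range M,
      |(#{x ∈ Ioc 0 t | a.Coprime x} : ℝ) - (φ a : ℝ) * t / a| ≤ φ a := fun t _ =>
    Nat.count_coprime_eq_totient a ▸ (Nat.periodic_coprime a).abs_card_filter_Ioc_sub_le ha t
  have hgauss : ∀ n : ℕ, ∑ t ∈ range n, ((φ a : ℝ) * t / a) =
      (φ a : ℝ) * n ^ 2 / (2 * a) - (φ a : ℝ) * n / (2 * a) := by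
    intro n
    induction n with
    | zero => simp
    | succ n ih => rw [sum_range_succ, ih]; push_cast; ring
  have hmain :
      |∑ t ∈ range M, ((φ a : ℝ) * t / a) - (φ a : ℝ) * M ^ 2 / (2 * a)| ≤ (a * M : ℝ) := by
    rw [hgauss, sub_sub_cancel_left, abs_neg, abs_of_nonneg (by positivity),
      div_le_iff₀ (by positivity)]
    nlinarith [mul_le_mul_of_nonneg_right hφ hM,
      mul_nonneg (mul_nonneg (by linarith : (0 : ℝ) ≤ a) hM) (by linarith : (0 : ℝ) ≤ 2 * a - 1)]
  calc _ ≤ |∑ t ∈ range M, ((#{x ∈ Ioc 0 t | a.Coprime x} : ℝ) - (φ a : ℝ) * t / a)|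
        + |∑ t ∈ range M, ((φ a : ℝ) * t / a) - (φ a : ℝ) * M ^ 2 / (2 * a)| := by
        rw [sum_sub_distrib]
        exact abs_sub_le _ _ _
    _ ≤ M * φ a + a * M := by
        gcongr
        exact (abs_sum_le_sum_abs _ _).trans ((sum_le_sum hterm).trans (by simp))
    _ ≤ 2 * a * M := by nlinarith [mul_le_mul_of_nonneg_left hφ hM]

theorem abs_invPairCount_sub_le {a : ℕ} (ha : 0 < a) (M : ℕ) :
    |(invPairCount a M : ℝ) - φ a / (a : ℝ) ^ 2 * M ^ 2 / 2| ≤ (3 * M : ℝ) := by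
  set S : ℝ := ∑ t ∈ range M, #{x ∈ Ioc 0 t | a.Coprime x}
  have haR : (0 : ℝ) < a := by exact_mod_cast ha
  have hmain : |S / a - φ a / (a : ℝ) ^ 2 * M ^ 2 / 2| ≤ (2 * M : ℝ) := by
    rw [show S / a - φ a / (a : ℝ) ^ 2 * M ^ 2 / 2 = (S - φ a * M ^ 2 / (2 * a)) / a by
      field_simp, abs_div, abs_of_pos haR, div_le_iff₀ haR]
    linarith [abs_sum_range_card_coprime_sub_le ha M]
  calc _ ≤ |(invPairCount a M : ℝ) - S / a| + |S / a - φ a / (a : ℝ) ^ 2 * M ^ 2 / 2| :=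
        abs_sub_le _ _ _
    _ ≤ 3 * M := by linarith [abs_invPairCount_sub_sum_card_coprime_le ha M]

theorem abs_NaT_sub_le {N a : ℕ} (ha : 0 < a) (h2a : 2 * a < N) :
    |(NaT N a : ℝ) - φ a / (a : ℝ) ^ 2 * ((N : ℝ) - 2 * a) ^ 2 / 2| ≤ (3 * N : ℝ) := by
  have h := abs_invPairCount_sub_le ha (N - 2 * a)
  rw [Nat.cast_sub h2a.le] at h
  push_cast at h
  rw [NaT_eq_invPairCount]
  linarith [(a.cast_nonneg : (0 : ℝ) ≤ a)]

theorem stmt_14_general (c : ℝ) :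
    ∃ C : ℝ, 0 < C ∧ ∀ N : ℕ, 1 ≤ N →
      |(∑ a ∈ (Finset.Ico 1 N).filter
            (fun a : ℕ => (a : ℝ) ≤ (N : ℝ) ^ c ∧ 2 * a < N), (NaT N a : ℝ))
        - ∑ a ∈ (Finset.Ico 1 N).filter
            (fun a : ℕ => (a : ℝ) ≤ (N : ℝ) ^ c ∧ 2 * a < N),
            (φ a : ℝ) / (a : ℝ) ^ 2 * ((N : ℝ) - 2 * a) ^ 2 / 2|
        ≤ C * (N : ℝ) ^ ((1 : ℝ) + c) := by
  refine ⟨3, by norm_num, fun N hN => ?_⟩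
  set A := (Ico 1 N).filter fun a : ℕ => (a : ℝ) ≤ (N : ℝ) ^ c ∧ 2 * a < N
  have hNR : (0 : ℝ) < N := by exact_mod_cast hN
  have hA : (#A : ℝ) ≤ (N : ℝ) ^ c := by
    have hsub : A ⊆ Icc 1 ⌊(N : ℝ) ^ c⌋₊ := fun a ha => by
      simp only [A, mem_filter, mem_Ico] at ha
      exact mem_Icc.mpr ⟨ha.1.1, Nat.le_floor ha.2.1⟩
    calc (#A : ℝ) ≤ ⌊(N : ℝ) ^ c⌋₊ := by simpa using card_le_card hsub
      _ ≤ (N : ℝ) ^ c := Nat.floor_le (by positivity)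
  have hterm : ∀ a ∈ A, |(NaT N a : ℝ) - φ a / (a : ℝ) ^ 2 * ((N : ℝ) - 2 * a) ^ 2 / 2| ≤
      (3 * N : ℝ) := fun a ha => by
    simp only [A, mem_filter, mem_Ico] at ha
    exact abs_NaT_sub_le (by omega) ha.2.2
  rw [← sum_sub_distrib]
  calc _ ≤ ∑ a ∈ A, (3 * N : ℝ) := (abs_sum_le_sum_abs _ _).trans (sum_le_sum hterm)
    _ = #A * (3 * N) := by simp
    _ ≤ (N : ℝ) ^ c * (3 * N) := by gcongr
    _ = 3 * (N : ℝ) ^ ((1 : ℝ) + c) := by rw [Real.rpow_add hNR, Real.rpow_one]; ring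

/-- Lemma 4.1: for `0 < c < 1`,
`Σ_{a ≤ N^c} N_a(T̃_{N,a}) = Σ_{a ≤ N^c} (φ(a)/a²)(N−2a)²/2 + O(N^{1+c})`
(the sum being over positive integers `a ≤ N^c` with `a < N/2`). -/
theorem stmt_14 (c : ℝ) (hc0 : 0 < c) (hc1 : c < 1) :
    ∃ C : ℝ, 0 < C ∧ ∀ N : ℕ, 1 ≤ N →
      |(∑ a ∈ (Finset.Ico 1 N).filter
            (fun a : ℕ => (a : ℝ) ≤ (N : ℝ) ^ c ∧ 2 * a < N), (NaT N a : ℝ))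
        - ∑ a ∈ (Finset.Ico 1 N).filter
            (fun a : ℕ => (a : ℝ) ≤ (N : ℝ) ^ c ∧ 2 * a < N),
            (φ a : ℝ) / (a : ℝ) ^ 2 * ((N : ℝ) - 2 * a) ^ 2 / 2|
        ≤ C * (N : ℝ) ^ ((1 : ℝ) + c) :=
  stmt_14_general c
end

section
/- Σ_{a < N} φ(a)/a² = (1/ζ(2))·(log N + γ − ζ'(2)/ζ(2)) + O((log N)/N) as N → ∞. -/
/-!
Since `φ = μ ⋆ id`, we have `∑_{a ≤ n} φ(a)/a² = ∑_{d ≤ n} μ(d)/d² · H_{⌊n/d⌋}`, where `H` denotes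
the harmonic numbers. Inserting `H_m = log m + γ + O(1/m)` turns this into
`(log n + γ) ∑_{d ≤ n} μ(d)/d² - ∑_{d ≤ n} μ(d) log d / d² + O(log n / n)`. The two complete series
are `1/ζ(2) = 6/π²` and `-(1/ζ)'(2) = ζ'(2)/ζ(2)²`, and their tails are `O(1/n)` and `O(log n / n)`,
bounded by telescoping.
-/

open scoped Real Nat

open Finset Real
open scoped ArithmeticFunction.Moebius LSeries.notation

lemma log_add_one_sub_log_le {x : ℝ} (hx : 0 < x) : log (x + 1) - log x ≤ x⁻¹ := by
  rw [← log_div (by positivity) hx.ne']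
  calc log ((x + 1) / x) ≤ (x + 1) / x - 1 := log_le_sub_one_of_pos (by positivity)
    _ = x⁻¹ := by field_simp; ring

lemma inv_sq_add_one_le {x : ℝ} (hx : 0 < x) : ((x + 1) ^ 2)⁻¹ ≤ x⁻¹ - (x + 1)⁻¹ := by
  rw [inv_sub_inv hx.ne' (by positivity), inv_eq_one_div,
    div_le_div_iff₀ (by positivity) (by positivity)]
  nlinarith

lemma log_div_sq_add_one_le {x : ℝ} (hx : 1 ≤ x) :
    log (x + 1) / (x + 1) ^ 2 ≤ (log x + 2) / x - (log (x + 1) + 2) / (x + 1) := by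
  have hlog : x * log (x + 1) - 1 ≤ x * log x := by
    have := mul_le_mul_of_nonneg_left (log_add_one_sub_log_le (by linarith)) (by linarith : 0 ≤ x)
    rw [mul_sub, mul_inv_cancel₀ (by positivity)] at this
    linarith
  have hL : 0 ≤ log (x + 1) := log_nonneg (by linarith)
  have hl : 0 ≤ log x := log_nonneg hx
  have key : log x + 1 ≤ (log x + 2) * (x + 1) - x * (log (x + 1) + 2) := by nlinarith
  rw [div_sub_div _ _ (by positivity) (by positivity),
    div_le_div_iff₀ (by positivity) (by positivity)]
  nlinarith [mul_le_mul_of_nonneg_right key (by positivity : (0 : ℝ) ≤ (x + 1) ^ 2)]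

lemma HasSum.abs_sub_sum_range_le {f F : ℕ → ℝ} {a : ℝ} {n : ℕ} (hf : HasSum f a)
    (hF : ∀ k, 0 ≤ F k) (hfF : ∀ k ≥ n, |f (k + 1)| ≤ F k - F (k + 1)) :
    |a - ∑ i ∈ range (n + 1), f i| ≤ F n := by
  have htail := (hasSum_nat_add_iff' (n + 1)).mpr hf
  refine le_of_tendsto' htail.tendsto_sum_nat.abs fun m ↦ ?_
  calc |∑ i ∈ range m, f (i + (n + 1))| ≤ ∑ i ∈ range m, |f (i + n + 1)| :=
        abs_sum_le_sum_abs _ _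
    _ ≤ ∑ i ∈ range m, (F (i + n) - F (i + 1 + n)) :=
        sum_le_sum fun i _ ↦ by rw [add_right_comm i 1]; exact hfF (i + n) (by omega)
    _ = F n - F (m + n) := by rw [sum_range_sub' (fun i ↦ F (i + n)), Nat.zero_add]
    _ ≤ F n := sub_le_self _ (hF _)

lemma sum_range_succ_eq_sum_Ioc {M : Type*} [AddCommMonoid M] {f : ℕ → M} (h0 : f 0 = 0)
    (n : ℕ) : ∑ i ∈ range (n + 1), f i = ∑ i ∈ Ioc 0 n, f i := by
  rw [range_eq_Ico, sum_eq_sum_Ico_succ_bot (Nat.succ_pos n), h0, zero_add,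
    ← Ico_add_one_add_one_eq_Ioc]
  rfl

lemma harmonic_eq_sum_Ioc_inv (n : ℕ) : (harmonic n : ℝ) = ∑ i ∈ Ioc 0 n, (i : ℝ)⁻¹ := by
  rw [harmonic_eq_sum_Icc, ← Icc_add_one_left_eq_Ioc]
  push_cast
  rfl

lemma abs_harmonic_floor_sub_log_sub_eulerMascheroniConstant_le {x : ℝ} (hx : 1 ≤ x) :
    |(harmonic ⌊x⌋₊ : ℝ) - log x - eulerMascheroniConstant| ≤ 2 / x := by
  set m := ⌊x⌋₊
  have hm₁ : 1 ≤ m := Nat.one_le_floor_iff x |>.mpr hx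
  have hm : (1 : ℝ) ≤ m := by exact_mod_cast hm₁
  have hmx : (m : ℝ) ≤ x := Nat.floor_le (by linarith)
  have hxm : x < m + 1 := Nat.lt_floor_add_one x
  have hlower := eulerMascheroniSeq_lt_eulerMascheroniConstant m
  have hupper := eulerMascheroniConstant_lt_eulerMascheroniSeq' m
  rw [eulerMascheroniSeq] at hlower
  rw [eulerMascheroniSeq', if_neg (by omega)] at hupper
  -- `harmonic m - γ` and `log x` both lie in `[log m, log (m + 1)]`.
  have hlog₁ : log m ≤ log x := log_le_log (by linarith) hmx
  have hlog₂ : log x ≤ log (m + 1) := log_le_log (by linarith) hxm.le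
  have hgap : log (m + 1) - log m ≤ 2 / x := by
    refine (log_add_one_sub_log_le (by linarith)).trans ?_
    rw [inv_eq_one_div, div_le_div_iff₀ (by linarith) (by linarith)]
    linarith
  rw [abs_le]
  constructor <;> linarith

lemma LSeries_moebius_eq_inv_riemannZeta {s : ℂ} (hs : 1 < s.re) :
    L ↗μ s = (riemannZeta s)⁻¹ :=
  eq_inv_of_mul_eq_one_right <| LSeries_one_eq_riemannZeta hs ▸ LSeries_one_mul_Lseries_moebius hs

lemma LSeries_logMul_moebius_eq_deriv_riemannZeta_div_sq {s : ℂ} (hs : 1 < s.re) :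
    L (LSeries.logMul ↗μ) s = deriv riemannZeta s / riemannZeta s ^ 2 := by
  have hζ : HasDerivAt riemannZeta (deriv riemannZeta s) s :=
    (differentiableAt_riemannZeta fun h ↦ by simp [h] at hs).hasDerivAt
  have hμ : deriv (L ↗μ) s = deriv (fun z ↦ (riemannZeta z)⁻¹) s :=
    Filter.EventuallyEq.deriv_eq <| Filter.eventuallyEq_iff_exists_mem.mpr
      ⟨{z | 1 < z.re}, (isOpen_lt continuous_const Complex.continuous_re).mem_nhds hs,
        fun _ ↦ LSeries_moebius_eq_inv_riemannZeta⟩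
  have hinv : deriv (fun z ↦ (riemannZeta z)⁻¹) s = -deriv riemannZeta s / riemannZeta s ^ 2 :=
    (hζ.inv (riemannZeta_ne_zero_of_one_lt_re hs)).deriv
  have habs : LSeries.abscissaOfAbsConv ↗μ < s.re := by
    rw [ArithmeticFunction.abscissaOfAbsConv_moebius]; exact_mod_cast hs
  rw [← neg_neg (L _ s), ← LSeries_deriv habs, hμ, hinv, neg_div, neg_neg]

-- `s ≠ 0` makes `f 0 / 0 ^ s` vanish, matching the L-series convention of dropping `n = 0`.
lemma LSeriesSummable.hasSum_div_rpow {f : ℕ → ℝ} {s : ℝ}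
    (hf : LSeriesSummable (fun n ↦ (f n : ℂ)) s) (hs : s ≠ 0) :
    HasSum (fun n ↦ f n / (n : ℝ) ^ s) (L (fun n ↦ (f n : ℂ)) s).re := by
  convert Complex.hasSum_re hf.LSeriesHasSum using 1
  ext n
  rcases eq_or_ne n 0 with rfl | hn
  · simp [Real.zero_rpow hs]
  · rw [LSeries.term_of_ne_zero hn, ← Complex.ofReal_natCast,
      ← Complex.ofReal_cpow n.cast_nonneg, ← Complex.ofReal_div, Complex.ofReal_re]

lemma hasSum_moebius_div_sq : HasSum (fun n ↦ (μ n : ℝ) / (n : ℝ) ^ 2) (6 / π ^ 2) := by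
  have hs : 1 < (2 : ℂ).re := by norm_num
  have h := LSeriesSummable.hasSum_div_rpow (f := fun n ↦ (μ n : ℝ))
    (by simpa using ArithmeticFunction.LSeriesSummable_moebius_iff.mpr hs) two_ne_zero
  simp only [Real.rpow_two, Complex.ofReal_ofNat] at h
  convert h using 1
  rw [show (fun n ↦ ((μ n : ℝ) : ℂ)) = ↗μ by ext; simp, LSeries_moebius_eq_inv_riemannZeta hs,
    riemannZeta_two, inv_div, show (6 : ℂ) / π ^ 2 = ((6 / π ^ 2 : ℝ) : ℂ) by push_cast; rfl,
    Complex.ofReal_re]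

lemma hasSum_moebius_mul_log_div_sq :
    HasSum (fun n ↦ (μ n : ℝ) * log n / (n : ℝ) ^ 2)
      ((deriv riemannZeta 2).re * (6 / π ^ 2) ^ 2) := by
  have hs : 1 < (2 : ℂ).re := by norm_num
  have habs : LSeries.abscissaOfAbsConv ↗μ < (2 : ℂ).re := by
    rw [ArithmeticFunction.abscissaOfAbsConv_moebius]; exact_mod_cast hs
  have h := LSeriesSummable.hasSum_div_rpow (f := fun n ↦ (μ n : ℝ) * log n)
    (by simpa [LSeries.logMul, mul_comm] using LSeriesSummable_logMul_of_lt_re habs) two_ne_zero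
  simp only [Real.rpow_two, Complex.ofReal_ofNat] at h
  convert h using 1
  rw [show (fun n ↦ (((μ n : ℝ) * log n : ℝ) : ℂ)) = LSeries.logMul ↗μ by ext; simp [mul_comm],
    LSeries_logMul_moebius_eq_deriv_riemannZeta_div_sq hs, riemannZeta_two,
    show ((π : ℂ) ^ 2 / 6) ^ 2 = (((π ^ 2 / 6) ^ 2 : ℝ) : ℂ) by push_cast; rfl,
    Complex.div_ofReal_re]
  field_simp

lemma abs_moebius_mul_le (d : ℕ) (x : ℝ) : |(μ d : ℝ) * x| ≤ |x| := by
  rw [abs_mul]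
  exact mul_le_of_le_one_left (abs_nonneg x)
    (by exact_mod_cast ArithmeticFunction.abs_moebius_le_one)

lemma abs_sum_Ioc_moebius_div_sq_sub_le {n : ℕ} (hn : 1 ≤ n) :
    |∑ d ∈ Ioc 0 n, (μ d : ℝ) / d ^ 2 - 6 / π ^ 2| ≤ (n : ℝ)⁻¹ := by
  rw [abs_sub_comm, ← sum_range_succ_eq_sum_Ioc (by simp)]
  refine hasSum_moebius_div_sq.abs_sub_sum_range_le (F := fun k : ℕ ↦ (k : ℝ)⁻¹)
    (fun k ↦ by positivity) fun k hk ↦ ?_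
  have hk' : (0 : ℝ) < k := by exact_mod_cast hn.trans hk
  calc |(μ (k + 1) : ℝ) / ((k + 1 : ℕ) : ℝ) ^ 2| ≤ (((k : ℝ) + 1) ^ 2)⁻¹ := by
        rw [div_eq_mul_inv]; push_cast
        exact (abs_moebius_mul_le _ _).trans_eq (abs_of_pos (by positivity))
    _ ≤ _ := by push_cast; exact inv_sq_add_one_le hk'

lemma abs_sum_Ioc_moebius_mul_log_div_sq_sub_le {n : ℕ} (hn : 1 ≤ n) :
    |∑ d ∈ Ioc 0 n, (μ d : ℝ) * log d / d ^ 2 - (deriv riemannZeta 2).re * (6 / π ^ 2) ^ 2| ≤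
      (log n + 2) / n := by
  rw [abs_sub_comm, ← sum_range_succ_eq_sum_Ioc (by simp)]
  refine hasSum_moebius_mul_log_div_sq.abs_sub_sum_range_le
    (F := fun k : ℕ ↦ (log k + 2) / k)
    (fun k ↦ div_nonneg (by linarith [log_natCast_nonneg k]) k.cast_nonneg) fun k hk ↦ ?_
  have hk' : (1 : ℝ) ≤ k := by exact_mod_cast hn.trans hk
  calc |(μ (k + 1) : ℝ) * log ((k + 1 : ℕ) : ℝ) / ((k + 1 : ℕ) : ℝ) ^ 2|
        ≤ log ((k : ℝ) + 1) / ((k : ℝ) + 1) ^ 2 := by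
        rw [mul_div_assoc]; push_cast
        exact (abs_moebius_mul_le _ _).trans_eq
          (abs_of_nonneg (div_nonneg (log_nonneg (by linarith)) (by positivity)))
    _ ≤ _ := by push_cast; exact log_div_sq_add_one_le hk'

lemma totient_eq_sum_moebius_mul {n : ℕ} (hn : 0 < n) :
    (φ n : ℝ) = ∑ x ∈ n.divisorsAntidiagonal, (μ x.1 : ℝ) * x.2 :=
  (ArithmeticFunction.sum_eq_iff_sum_mul_moebius_eq (f := fun n ↦ (φ n : ℝ))
    (g := fun n ↦ (n : ℝ)) |>.mp (fun n _ ↦ by exact_mod_cast Nat.sum_totient n) n hn).symm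

lemma sum_Ioc_totient_div_sq_eq_sum_moebius_mul_harmonic (n : ℕ) :
    ∑ a ∈ Ioc 0 n, (φ a : ℝ) / a ^ 2 =
      ∑ d ∈ Ioc 0 n, (μ d : ℝ) / d ^ 2 * harmonic (n / d) := by
  let f : ArithmeticFunction ℝ := ⟨fun d ↦ (μ d : ℝ) / d ^ 2, by simp⟩
  let g : ArithmeticFunction ℝ := ⟨fun e ↦ (e : ℝ)⁻¹, by simp⟩
  have hfg : ∀ a ∈ Ioc 0 n, (φ a : ℝ) / a ^ 2 = (f * g) a := by
    intro a ha
    rw [totient_eq_sum_moebius_mul (mem_Ioc.mp ha).1, sum_div, ArithmeticFunction.mul_apply]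
    refine sum_congr rfl fun x hx ↦ ?_
    obtain ⟨rfl, ha0⟩ := Nat.mem_divisorsAntidiagonal.mp hx
    obtain ⟨hx₁, hx₂⟩ := mul_ne_zero_iff.mp ha0
    simp only [f, g, ArithmeticFunction.coe_mk]
    push_cast
    field_simp
  rw [sum_congr rfl hfg, ArithmeticFunction.sum_Ioc_mul_eq_sum_sum]
  simp [f, g, harmonic_eq_sum_Ioc_inv]

lemma abs_sum_moebius_div_sq_mul_harmonic_sub_le (n : ℕ) :
    |∑ d ∈ Ioc 0 n, (μ d : ℝ) / d ^ 2 *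
        (harmonic (n / d) - (log n - log d + eulerMascheroniConstant))| ≤
      2 * (1 + log n) / n := by
  have hterm : ∀ d ∈ Ioc 0 n, |(μ d : ℝ) / d ^ 2 *
      (harmonic (n / d) - (log n - log d + eulerMascheroniConstant))| ≤ 2 / n * (d : ℝ)⁻¹ := by
    intro d hd
    obtain ⟨hd₀, hdn⟩ := mem_Ioc.mp hd
    have hd : (0 : ℝ) < d := by exact_mod_cast hd₀
    have hnd : (d : ℝ) ≤ n := by exact_mod_cast hdn
    have h := abs_harmonic_floor_sub_log_sub_eulerMascheroniConstant_le
      ((one_le_div hd).mpr hnd)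
    rw [Nat.floor_div_eq_div, log_div (hd.trans_le hnd).ne' hd.ne', sub_sub] at h
    calc _ = |(μ d : ℝ) * ((harmonic (n / d) - (log n - log d + eulerMascheroniConstant)) /
          d ^ 2)| := by ring_nf
      _ ≤ |(harmonic (n / d) : ℝ) - (log n - log d + eulerMascheroniConstant)| / d ^ 2 :=
          (abs_moebius_mul_le _ _).trans_eq (by rw [abs_div, abs_of_pos (pow_pos hd 2)])
      _ ≤ 2 / (n / d) / d ^ 2 := by gcongr
      _ = 2 / n * (d : ℝ)⁻¹ := by field_simp
  calc _ ≤ ∑ d ∈ Ioc 0 n, 2 / n * (d : ℝ)⁻¹ :=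
        (abs_sum_le_sum_abs _ _).trans (sum_le_sum hterm)
    _ = 2 / n * harmonic n := by rw [← mul_sum, harmonic_eq_sum_Ioc_inv]
    _ ≤ 2 / n * (1 + log n) := by gcongr; exact harmonic_le_one_add_log n
    _ = 2 * (1 + log n) / n := by ring

theorem abs_sum_Ioc_totient_div_sq_sub_le {n : ℕ} (hn : 1 ≤ n) :
    |∑ a ∈ Ioc 0 n, (φ a : ℝ) / a ^ 2 - (6 / π ^ 2 * (log n + eulerMascheroniConstant)
        - (deriv riemannZeta 2).re * (6 / π ^ 2) ^ 2)| ≤ (4 * log n + 5) / n := by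
  set P := ∑ d ∈ Ioc 0 n, (μ d : ℝ) / d ^ 2
  set Q := ∑ d ∈ Ioc 0 n, (μ d : ℝ) * log d / d ^ 2
  set E := ∑ d ∈ Ioc 0 n, (μ d : ℝ) / d ^ 2 *
    (harmonic (n / d) - (log n - log d + eulerMascheroniConstant))
  have hsplit : ∑ a ∈ Ioc 0 n, (φ a : ℝ) / a ^ 2 =
      E + (log n + eulerMascheroniConstant) * P - Q := by
    rw [sum_Ioc_totient_div_sq_eq_sum_moebius_mul_harmonic, mul_sum, ← sum_add_distrib,
      ← sum_sub_distrib]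
    exact sum_congr rfl fun d _ ↦ by ring
  have hγ₀ : 0 ≤ log n + eulerMascheroniConstant :=
    add_nonneg (log_natCast_nonneg n) (by linarith [one_half_lt_eulerMascheroniConstant])
  have hγ₁ : log n + eulerMascheroniConstant ≤ log n + 1 := by
    linarith [eulerMascheroniConstant_lt_two_thirds]
  have hPterm : |(log n + eulerMascheroniConstant) * (P - 6 / π ^ 2)| ≤ (log n + 1) / n := by
    rw [abs_mul, abs_of_nonneg hγ₀, div_eq_mul_inv]
    exact mul_le_mul hγ₁ (abs_sum_Ioc_moebius_div_sq_sub_le hn) (abs_nonneg _) (by linarith)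
  have hQterm := abs_sum_Ioc_moebius_mul_log_div_sq_sub_le hn
  rw [abs_sub_comm] at hQterm
  calc _ = |E + (log n + eulerMascheroniConstant) * (P - 6 / π ^ 2) +
        ((deriv riemannZeta 2).re * (6 / π ^ 2) ^ 2 - Q)| := by rw [hsplit]; ring_nf
    _ ≤ 2 * (1 + log n) / n + (log n + 1) / n + (log n + 2) / n :=
        (abs_add_three _ _ _).trans <| add_le_add_three
          (abs_sum_moebius_div_sq_mul_harmonic_sub_le n) hPterm hQterm
    _ = (4 * log n + 5) / n := by ring

/-- `Σ_{a<N} φ(a)/a² = (1/ζ(2))(log N + γ − ζ'(2)/ζ(2)) + O(log N / N)`,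
with `ζ(2) = π²/6` and `γ` the Euler–Mascheroni constant. -/
theorem stmt_17 :
    ∃ C : ℝ, 0 < C ∧ ∀ N : ℕ, 2 ≤ N →
      |(∑ a ∈ Finset.Ico 1 N, (φ a : ℝ) / (a : ℝ) ^ 2)
          - 1 / (π ^ 2 / 6) *
            (Real.log N + Real.eulerMascheroniConstant
              - (deriv riemannZeta 2).re / (π ^ 2 / 6))|
        ≤ C * Real.log N / N := by
  refine ⟨32, by norm_num, fun N hN ↦ ?_⟩
  obtain ⟨n, rfl⟩ : ∃ n, N = n + 1 := ⟨N - 1, by omega⟩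
  have hn₁ : 1 ≤ n := by omega
  have hn : (1 : ℝ) ≤ n := by exact_mod_cast hn₁
  have hlog : log n ≤ log (n + 1) := log_le_log (by linarith) (by linarith)
  have hlog₂ : 1 / 2 < log (n + 1) := by
    linarith [log_two_gt_d9, log_le_log two_pos (by linarith : (2 : ℝ) ≤ n + 1)]
  have hshift : |6 / π ^ 2 * (log (n + 1) - log n)| ≤ (n : ℝ)⁻¹ := by
    have hπ : 6 / π ^ 2 ≤ 1 := by rw [div_le_one (by positivity)]; nlinarith [pi_gt_three]
    rw [abs_of_nonneg (mul_nonneg (by positivity) (sub_nonneg.mpr hlog))]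
    exact (mul_le_of_le_one_left (sub_nonneg.mpr hlog) hπ).trans
      (log_add_one_sub_log_le (by linarith))
  rw [show Ico 1 (n + 1) = Ioc 0 n from Ico_add_one_add_one_eq_Ioc 0 n]
  push_cast
  calc _ = |(∑ a ∈ Ioc 0 n, (φ a : ℝ) / a ^ 2 - (6 / π ^ 2 * (log n + eulerMascheroniConstant)
        - (deriv riemannZeta 2).re * (6 / π ^ 2) ^ 2)) - 6 / π ^ 2 * (log (n + 1) - log n)| := by
        congr 1; field_simp; ring
    _ ≤ (4 * log n + 5) / n + (n : ℝ)⁻¹ :=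
        (abs_sub _ _).trans (add_le_add (abs_sum_Ioc_totient_div_sq_sub_le hn₁) hshift)
    _ = (4 * log n + 6) / n := by field_simp; ring
    _ ≤ 32 * log (n + 1) / (n + 1) := by
        rw [div_le_div_iff₀ (by positivity) (by positivity)]
        nlinarith
end
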